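/- arXiv:2509.05132 — 3 statements merged into one kernel-verified Lean document; each statement's English description precedes it below -/
import Mathlib

section
/- Let G = (V,E) be a connected undirected graph on {1,...,n} whose identity labeling is a valid DFS numbering (equivalently, G has no conflicting pair). Suppose {u,v} ∈ E with u < p(v) < v. Then the graph G' = (V, E \ {{u,v}}) is still connected and its identity labeling is still a valid DFS numbering (G' has no conflicting pair). -/
/-!
Replay the given DFS run on the graph without the edge `{u,v}`. Because the run discovers
`1, 2, …, n` in this order, the active stack is increasing, so the parent `t` of a newly
discovered vertex `w` satisfies `p(w) ≤ t` (the neighbour `p(w)` of the undiscovered `w` must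
still be active) and hence `t = p(w)`. The deleted edge satisfies `u < p(v)`, so it is not a
tree edge, and every step of the run is still a DFS step; the tree edges `{p(w), w}` connect
every vertex to `1`.
-/

open Classical

/-- `adj` is (the adjacency relation of) a simple undirected graph on vertex set `{1,…,n}`. -/
def IsGraphOn (n : ℕ) (adj : ℕ → ℕ → Prop) : Prop :=
  Symmetric adj ∧ ∀ u v, adj u v → 1 ≤ u ∧ u ≤ n ∧ 1 ≤ v ∧ v ≤ n ∧ u ≠ v

/-- `p(v)`: the largest neighbour of `v` that is smaller than `v`, and `0` if none exists
(`sSup ∅ = 0` in `ℕ`). -/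
noncomputable def par (adj : ℕ → ℕ → Prop) (v : ℕ) : ℕ :=
  sSup {u | adj u v ∧ u < v}

/-- `(v, {u,w})` is a conflicting pair: `{u,w}` is an edge and `p(v) < u < v < w`. -/
def Conflict (adj : ℕ → ℕ → Prop) (v u w : ℕ) : Prop :=
  adj u w ∧ par adj v < u ∧ u < v ∧ v < w

/-- One step of a (nondeterministic) depth-first search.  The state consists of the list of
already discovered vertices, in order of discovery and together with the recorded (possibly
virtual) parent from which each was discovered, and of the stack of active vertices
(the white path, top first). -/
inductive DFSStep (n : ℕ) (adj : ℕ → ℕ → Prop) :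
    List (ℕ × ℕ) × List ℕ → List (ℕ × ℕ) × List ℕ → Prop
  | root (v : ℕ) (order : List (ℕ × ℕ)) (hv1 : 1 ≤ v) (hv2 : v ≤ n)
      (hnd : v ∉ order.map Prod.fst) :
      DFSStep n adj (order, []) (order ++ [(v, 0)], [v])
  | descend (v t : ℕ) (order : List (ℕ × ℕ)) (stack : List ℕ)
      (hadj : adj t v) (hnd : v ∉ order.map Prod.fst) :
      DFSStep n adj (order, t :: stack) (order ++ [(v, t)], v :: t :: stack)
  | backtrack (t : ℕ) (order : List (ℕ × ℕ)) (stack : List ℕ)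
      (hall : ∀ u, adj t u → u ∈ order.map Prod.fst) :
      DFSStep n adj (order, t :: stack) (order, stack)

/-- A complete DFS run discovering the vertices in the order given by the list `order`. -/
def DFSRun (n : ℕ) (adj : ℕ → ℕ → Prop) (order : List (ℕ × ℕ)) : Prop :=
  Relation.ReflTransGen (DFSStep n adj) ([], []) (order, [])

/-- The labelling `f` is a valid DFS numbering of the graph: some DFS run discovers the
vertices in the order of increasing labels `1, 2, …, n`. -/
def ValidDFSLabel (n : ℕ) (adj : ℕ → ℕ → Prop) (f : ℕ → ℕ) : Prop :=
  ∃ order, DFSRun n adj order ∧ (order.map Prod.fst).map f = List.range' 1 n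

/-- The identity labelling on `{1,…,n}` is a valid DFS numbering of the graph. -/
def ValidDFS (n : ℕ) (adj : ℕ → ℕ → Prop) : Prop :=
  ValidDFSLabel n adj id

/-- The graph is connected (on its vertex set `{1,…,n}`). -/
def ConnOn (n : ℕ) (adj : ℕ → ℕ → Prop) : Prop :=
  ∀ u v, 1 ≤ u → u ≤ n → 1 ≤ v → v ≤ n → Relation.ReflTransGen adj u v

/-- The degree of a vertex. -/
noncomputable def degree (adj : ℕ → ℕ → Prop) (v : ℕ) : ℕ :=
  Set.ncard {u | adj u v}

/-- The size `|E △ E'|` of the symmetric difference of the edge sets of two graphs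
(given by symmetric adjacency relations). -/
noncomputable def edgeDiff (a b : ℕ → ℕ → Prop) : ℕ :=
  Set.ncard {p : ℕ × ℕ | p.1 < p.2 ∧ ¬(a p.1 p.2 ↔ b p.1 p.2)}

section Par

variable {adj : ℕ → ℕ → Prop} {t w : ℕ}

lemma le_par (h : adj t w) (htw : t < w) : t ≤ par adj w :=
  le_csSup (s := {u | adj u w ∧ u < w}) ⟨w, fun _ hx => hx.2.le⟩ ⟨h, htw⟩

lemma par_adj_and_lt (h : adj t w) (htw : t < w) : adj (par adj w) w ∧ par adj w < w :=
  Nat.sSup_mem (s := {u | adj u w ∧ u < w}) ⟨t, h, htw⟩ ⟨w, fun _ hx => hx.2.le⟩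

end Par

lemma mem_of_reflTransGen_of_closed {α : Type*} {r : α → α → Prop} {D : List α}
    (hD : ∀ t ∈ D, ∀ w, r t w → w ∈ D) {a b : α} (hab : Relation.ReflTransGen r a b)
    (ha : a ∈ D) : b ∈ D := by
  induction hab with
  | refl => exact ha
  | tail _ hstep ih => exact hD _ ih _ hstep

lemma connOn_of_exists_lower_adj {n : ℕ} {adj : ℕ → ℕ → Prop} (hsymm : Std.Symm adj)
    (hlow : ∀ w, 1 < w → w ≤ n → ∃ t, 1 ≤ t ∧ t < w ∧ adj t w) : ConnOn n adj := by
  have hreach : ∀ w, 1 ≤ w → w ≤ n → Relation.ReflTransGen adj 1 w := by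
    intro w
    induction w using Nat.strong_induction_on with
    | _ w ih =>
      intro hw1 hwn
      rcases hw1.eq_or_lt with rfl | hw1
      · exact .refl
      · obtain ⟨t, ht1, htw, hadj⟩ := hlow w hw1 hwn
        exact (ih t htw ht1 (by omega)).tail hadj
  intro a b ha1 ha2 hb1 hb2
  exact (symm_of _ (hreach a ha1 ha2)).trans (hreach b hb1 hb2)

def DFSInvariant (adj : ℕ → ℕ → Prop) (st : List (ℕ × ℕ) × List ℕ) : Prop :=
  st.2.reverse.Sublist (st.1.map Prod.fst) ∧
    ∀ t ∈ st.1.map Prod.fst, t ∉ st.2 → ∀ w, adj t w → w ∈ st.1.map Prod.fst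

def DiscoversInOrder (order : List (ℕ × ℕ)) : Prop :=
  order.map Prod.fst = List.range' 1 order.length

lemma discoversInOrder_append_singleton {order : List (ℕ × ℕ)} {w t : ℕ} :
    DiscoversInOrder (order ++ [(w, t)]) ↔ DiscoversInOrder order ∧ w = order.length + 1 := by
  simp only [DiscoversInOrder, List.map_append, List.length_append, List.length_singleton,
    List.range'_1_concat, List.map_cons, List.map_nil]
  constructor
  · intro h
    obtain ⟨h1, h2⟩ := List.append_inj' h rfl
    exact ⟨h1, by simp at h2; omega⟩
  · rintro ⟨h1, rfl⟩
    rw [h1]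
    simp [Nat.add_comm]

section DFS

variable {n : ℕ} {adj : ℕ → ℕ → Prop}

lemma DFSStep.dfsInvariant {s s' : List (ℕ × ℕ) × List ℕ} (hstep : DFSStep n adj s s')
    (hs : DFSInvariant adj s) : DFSInvariant adj s' := by
  obtain ⟨hsub, hclosed⟩ := hs
  cases hstep with
  | root w order =>
    refine ⟨by simp, fun t ht hts x hx => ?_⟩
    simp only [List.map_append, List.mem_append] at ht ⊢
    rcases ht with ht | ht
    · exact .inl (hclosed t ht List.not_mem_nil x hx)
    · simp_all
  | descend w t' order stack =>
    refine ⟨by simpa using hsub.append (List.Sublist.refl [w]), fun t ht hts x hx => ?_⟩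
    simp only [List.map_append, List.mem_append] at ht ⊢
    rcases ht with ht | ht
    · exact .inl (hclosed t ht (fun h => hts (List.mem_cons_of_mem _ h)) x hx)
    · simp_all
  | backtrack t' order stack hall =>
    refine ⟨(List.sublist_append_left _ [t']).trans (by simpa using hsub), fun t ht hts x hx => ?_⟩
    by_cases htt' : t = t'
    · subst htt'
      exact hall x hx
    · exact hclosed t ht (by simp [htt', hts]) x hx

lemma dfsInvariant_of_reflTransGen {st : List (ℕ × ℕ) × List ℕ}
    (h : Relation.ReflTransGen (DFSStep n adj) ([], []) st) : DFSInvariant adj st := by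
  induction h with
  | refl => exact ⟨by simp, by simp⟩
  | tail _ hstep ih => exact hstep.dfsInvariant ih

lemma DFSInvariant.eq_nil_of_root (hconn : ConnOn n adj) {order : List (ℕ × ℕ)} {w : ℕ}
    (hinv : DFSInvariant adj (order, [])) (hord : DiscoversInOrder order) (hw1 : 1 ≤ w)
    (hwn : w ≤ n) (hnew : w ∉ order.map Prod.fst) : order = [] := by
  by_contra hne
  have h1 : 1 ∈ order.map Prod.fst := by
    rw [hord, List.mem_range'_1]
    exact ⟨le_rfl, by simpa [Nat.pos_iff_ne_zero] using hne⟩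
  exact hnew (mem_of_reflTransGen_of_closed (fun t ht => hinv.2 t ht List.not_mem_nil)
    (hconn 1 w le_rfl (hw1.trans hwn) hw1 hwn) h1)

lemma DFSInvariant.eq_par_of_descend {order : List (ℕ × ℕ)} {stack : List ℕ} {w t : ℕ}
    (hinv : DFSInvariant adj (order, t :: stack)) (hord : DiscoversInOrder (order ++ [(w, t)]))
    (hadj : adj t w) (hnew : w ∉ order.map Prod.fst) : t < w ∧ t = par adj w := by
  obtain ⟨hsub, hclosed⟩ := hinv
  obtain ⟨hord₀, rfl⟩ := discoversInOrder_append_singleton.mp hord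
  have hmem : ∀ x, x ∈ order.map Prod.fst ↔ 1 ≤ x ∧ x < order.length + 1 := by
    intro x; rw [hord₀, List.mem_range'_1]; omega
  have ht := (hmem t).mp (hsub.subset (by simp))
  have ht_le_par := le_par hadj ht.2
  obtain ⟨hpar_adj, hpar_lt⟩ := par_adj_and_lt hadj ht.2
  have hpar_active : par adj (order.length + 1) ∈ t :: stack := by
    by_contra hpar
    exact hnew (hclosed _ ((hmem _).mpr ⟨by omega, hpar_lt⟩) hpar _ hpar_adj)
  have hdecr : ∀ x ∈ stack, x < t := by
    have := (List.pairwise_lt_range' (s := 1) (n := order.length)).sublist (hord₀ ▸ hsub)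
    rw [List.pairwise_reverse, List.pairwise_cons] at this
    exact this.1
  rcases List.mem_cons.mp hpar_active with h | h
  · exact ⟨ht.2, h.symm⟩
  · exact absurd (hdecr _ h) (by omega)

lemma discovery_entry_of_reflTransGen (hconn : ConnOn n adj) {st : List (ℕ × ℕ) × List ℕ}
    (h : Relation.ReflTransGen (DFSStep n adj) ([], []) st) (hord : DiscoversInOrder st.1) :
    ∀ p ∈ st.1, p = (1, 0) ∨ (adj p.2 p.1 ∧ p.2 < p.1 ∧ p.2 = par adj p.1) := by
  induction h with
  | refl => simp
  | tail hrun hstep ih =>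
    cases hstep with
    | root w order hw1 hwn hnew =>
      obtain ⟨hord', hw⟩ := discoversInOrder_append_singleton.mp hord
      obtain rfl := (dfsInvariant_of_reflTransGen hrun).eq_nil_of_root hconn hord' hw1 hwn hnew
      simp_all
    | descend w t order stack hadj hnew =>
      obtain ⟨hord', -⟩ := discoversInOrder_append_singleton.mp hord
      have hpar := (dfsInvariant_of_reflTransGen hrun).eq_par_of_descend hord hadj hnew
      intro p hp
      rcases List.mem_append.mp hp with hp | hp
      · exact ih hord' p hp
      · simp only [List.mem_singleton] at hp
        exact .inr (hp ▸ ⟨hadj, hpar⟩)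
    | backtrack => exact ih hord

lemma reflTransGen_dfsStep_of_le {adj' : ℕ → ℕ → Prop} (hle : ∀ a b, adj' a b → adj a b)
    {s st : List (ℕ × ℕ) × List ℕ} (h : Relation.ReflTransGen (DFSStep n adj) s st)
    (hkeep : ∀ p ∈ st.1, adj p.2 p.1 → adj' p.2 p.1) :
    Relation.ReflTransGen (DFSStep n adj') s st := by
  induction h with
  | refl => exact .refl
  | tail _ hstep ih =>
    cases hstep with
    | root w order hw1 hwn hnew =>
      exact (ih fun p hp => hkeep p (by simp [hp])).tail (.root w order hw1 hwn hnew)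
    | descend w t order stack hadj hnew =>
      exact (ih fun p hp => hkeep p (by simp [hp])).tail
        (.descend w t order stack (hkeep (w, t) (by simp) hadj) hnew)
    | backtrack t order stack hall =>
      exact (ih hkeep).tail (.backtrack t order stack fun x hx => hall x (hle _ _ hx))

end DFS

theorem remove_back_edge_general (n : ℕ) (adj : ℕ → ℕ → Prop) (hG : IsGraphOn n adj)
    (hconn : ConnOn n adj) (hvalid : ValidDFS n adj)
    (u v : ℕ) (h1 : u < par adj v) (h2 : par adj v < v) :
    let adj' : ℕ → ℕ → Prop := fun a b =>
      adj a b ∧ ¬((a = u ∧ b = v) ∨ (a = v ∧ b = u))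
    ConnOn n adj' ∧ ValidDFS n adj' := by
  intro adj'
  obtain ⟨order, hrun, horder⟩ := hvalid
  have horder' : order.map Prod.fst = List.range' 1 n := by simpa using horder
  have hentry := discovery_entry_of_reflTransGen hconn hrun
    (by simp [DiscoversInOrder, horder', ← List.length_map (f := Prod.fst) (as := order)])
  have hkeep : ∀ p ∈ order, adj p.2 p.1 → adj' p.2 p.1 := by
    intro p hp hadj
    rcases hentry p hp with rfl | ⟨-, hlt, hpar⟩
    · exact absurd (hG.2 _ _ hadj).1 (by simp)
    · refine ⟨hadj, ?_⟩
      rintro (⟨rfl, rfl⟩ | ⟨rfl, rfl⟩) <;> omega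
  refine ⟨connOn_of_exists_lower_adj ?_ fun w hw1 hwn => ?_,
    order, reflTransGen_dfsStep_of_le (fun _ _ h => h.1) hrun hkeep, horder⟩
  · exact ⟨fun a b ⟨hab, hne⟩ => ⟨hG.1 hab, by tauto⟩⟩
  · obtain ⟨⟨w', t⟩, hp, rfl⟩ := List.mem_map.mp
      (horder' ▸ List.mem_range'_1.mpr ⟨hw1.le, by omega⟩ : w ∈ order.map Prod.fst)
    rcases hentry _ hp with h | ⟨hadj, hlt, -⟩
    · simp_all
    · exact ⟨t, (hG.2 _ _ hadj).1, hlt, hkeep _ hp hadj⟩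

/-- If `G` is connected, its identity labelling is a valid DFS numbering,
and `{u,v} ∈ E` with `u < p(v) < v`, then the graph obtained by deleting `{u,v}` is still
connected and its identity labelling is still a valid DFS numbering. -/
theorem remove_back_edge (n : ℕ) (adj : ℕ → ℕ → Prop) (hG : IsGraphOn n adj)
    (hconn : ConnOn n adj) (hvalid : ValidDFS n adj)
    (u v : ℕ) (hadj : adj u v) (h1 : u < par adj v) (h2 : par adj v < v) :
    let adj' : ℕ → ℕ → Prop := fun a b =>
      adj a b ∧ ¬((a = u ∧ b = v) ∨ (a = v ∧ b = u))
    ConnOn n adj' ∧ ValidDFS n adj' :=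
  remove_back_edge_general n adj hG hconn hvalid u v h1 h2
end

section
/- Let G = (V,E) be an undirected graph on {1,...,n}. If the bipartite conflict graph C (with parts V and E and edges the conflicting pairs) has a vertex cover of size k, then there exists a graph G* = (V,E*) with |E △ E*| ≤ 2k such that the identity labeling is a valid DFS numbering of G* (ignoring degree constraints). -/
open Classical

/-!
Reading the vertices in increasing order, the DFS stack right after discovering `v` is the
chain `v, p(v), p(p(v)), …` (`ancestors`). When there is no conflicting pair, a vertex `u ≤ v`
with a neighbour `w > v` is still on this stack, so `v + 1` can be discovered from `p(v + 1)`
after backtracking over finished vertices only; hence the identity labelling is a DFS numbering.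

To destroy every conflicting pair, fix each vertex `v` of the cover by adding `{v - 1, v}`, which
makes `p(v) = v - 1`, and fix each edge `{u, w}` (`u < w`) of the cover by removing it and fixing
`w`. Removing edges can only lower `p` at fixed vertices, so no new conflict arises, and the
cost is one edit per vertex and at most two per edge.
-/

section Parent

variable {adj adj' : ℕ → ℕ → Prop} {u v : ℕ}

theorem bddAbove_lowerNeighbors (adj : ℕ → ℕ → Prop) (v : ℕ) :
    BddAbove {u | adj u v ∧ u < v} :=
  ⟨v, fun _ hu => hu.2.le⟩

theorem le_par_s8 (h : adj u v) (huv : u < v) : u ≤ par adj v :=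
  le_csSup (bddAbove_lowerNeighbors adj v) ⟨h, huv⟩

theorem par_lt_self (hv : v ≠ 0) : par adj v < v := by
  obtain h | h := Set.eq_empty_or_nonempty {u | adj u v ∧ u < v}
  · simp only [par, h, csSup_empty, Nat.bot_eq_zero]
    omega
  · exact (Nat.sSup_mem h (bddAbove_lowerNeighbors adj v)).2

theorem adj_par (hp : par adj v ≠ 0) : adj (par adj v) v := by
  obtain h | h := Set.eq_empty_or_nonempty {u | adj u v ∧ u < v}
  · simp [par, h] at hp
  · exact (Nat.sSup_mem h (bddAbove_lowerNeighbors adj v)).1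

theorem par_le_par (h : ∀ u < v, adj u v → adj' u v) : par adj v ≤ par adj' v := by
  obtain h₀ | hne := Set.eq_empty_or_nonempty {u | adj u v ∧ u < v}
  · simp [par, h₀]
  · exact csSup_le_csSup (bddAbove_lowerNeighbors adj' v) hne fun u hu => ⟨h u hu.2 hu.1, hu.2⟩

end Parent

section Ancestors

variable {adj : ℕ → ℕ → Prop} {p t u v : ℕ}

noncomputable def ancestors (adj : ℕ → ℕ → Prop) : ℕ → List ℕ
  | 0 => []
  | v + 1 => (v + 1) :: ancestors adj (par adj (v + 1))
decreasing_by exact par_lt_self (Nat.succ_ne_zero v)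

@[simp]
theorem ancestors_zero : ancestors adj 0 = [] := by
  rw [ancestors]

theorem ancestors_of_ne_zero (hv : v ≠ 0) : ancestors adj v = v :: ancestors adj (par adj v) := by
  obtain ⟨v, rfl⟩ := Nat.exists_eq_succ_of_ne_zero hv
  rw [ancestors]

theorem pos_and_le_of_mem_ancestors (h : u ∈ ancestors adj v) : 0 < u ∧ u ≤ v := by
  induction v using Nat.strong_induction_on with
  | _ v ih =>
    rcases eq_or_ne v 0 with rfl | hv
    · simp at h
    rw [ancestors_of_ne_zero hv, List.mem_cons] at h
    rcases h with rfl | h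
    · omega
    · have := ih _ (par_lt_self hv) h
      have := par_lt_self (adj := adj) hv
      omega

theorem exists_ancestors_eq_append (hp : p ∈ ancestors adj v ∨ p = 0) :
    ∃ l, ancestors adj v = l ++ ancestors adj p ∧ ∀ t ∈ l, p < t := by
  induction v using Nat.strong_induction_on with
  | _ v ih =>
    rcases eq_or_ne v 0 with rfl | hv
    · obtain rfl : p = 0 := by simpa using hp
      exact ⟨[], rfl, by simp⟩
    rcases eq_or_ne p v with rfl | hpv
    · exact ⟨[], rfl, by simp⟩
    rw [ancestors_of_ne_zero hv, List.mem_cons] at hp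
    have hp' : p ∈ ancestors adj (par adj v) ∨ p = 0 := by tauto
    have hplt : p < v := by
      rcases hp' with h | h
      · have := pos_and_le_of_mem_ancestors h
        have := par_lt_self (adj := adj) hv
        omega
      · omega
    obtain ⟨l, hl, hlt⟩ := ih _ (par_lt_self hv) hp'
    refine ⟨v :: l, by rw [ancestors_of_ne_zero hv, hl, List.cons_append], ?_⟩
    simpa [hplt] using hlt

theorem mem_ancestors_of_le (hu : u ∈ ancestors adj v) (ht : t ∈ ancestors adj v)
    (hut : u ≤ t) : u ∈ ancestors adj t := by
  obtain ⟨l, hl, hlt⟩ := exists_ancestors_eq_append (Or.inl ht)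
  rw [hl, List.mem_append] at hu
  exact hu.resolve_left fun h => (hlt u h).not_ge hut

end Ancestors

def NoConflict (adj : ℕ → ℕ → Prop) : Prop :=
  ∀ v u w, ¬ Conflict adj v u w

section NoConflict

variable {n : ℕ} {adj : ℕ → ℕ → Prop} {u v w : ℕ}

-- A vertex with a neighbour not yet discovered is still on the DFS stack.
theorem NoConflict.mem_ancestors (hc : NoConflict adj) (hu : 0 < u) (huv : u ≤ v)
    (huw : adj u w) (hvw : v < w) : u ∈ ancestors adj v := by
  induction v generalizing u w with
  | zero => omega
  | succ v ih =>
    rw [ancestors_of_ne_zero (Nat.succ_ne_zero v)]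
    rcases eq_or_ne u (v + 1) with rfl | huv'
    · exact List.mem_cons_self
    have hu_anc : u ∈ ancestors adj v := ih hu (by omega) huw (by omega)
    have hup : u ≤ par adj (v + 1) := by
      by_contra hup
      rcases eq_or_ne w (v + 1) with rfl | hw
      · exact hup (le_par_s8 huw (by omega))
      · exact hc (v + 1) u w ⟨huw, by omega, by omega, by omega⟩
    have hplt := par_lt_self (adj := adj) (by omega : v + 1 ≠ 0)
    have hp_anc : par adj (v + 1) ∈ ancestors adj v :=
      ih (by omega) (by omega) (adj_par (by omega)) (Nat.lt_succ_self v)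
    exact List.mem_cons_of_mem _ (mem_ancestors_of_le hu_anc hp_anc hup)

theorem DFSStep.reflTransGen_backtrack_append {order : List (ℕ × ℕ)} {l s : List ℕ}
    (hl : ∀ t ∈ l, ∀ u, adj t u → u ∈ order.map Prod.fst) :
    Relation.ReflTransGen (DFSStep n adj) (order, l ++ s) (order, s) := by
  induction l with
  | nil => exact .refl
  | cons t l ih =>
    exact .head (DFSStep.backtrack t order _ (hl t List.mem_cons_self))
      (ih fun t ht => hl t (List.mem_cons_of_mem _ ht))

noncomputable def discovered (adj : ℕ → ℕ → Prop) (v : ℕ) : List (ℕ × ℕ) :=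
  (List.range' 1 v).map fun i => (i, par adj i)

theorem map_fst_discovered : (discovered adj v).map Prod.fst = List.range' 1 v := by
  simp [discovered, Function.comp_def]

theorem discovered_succ :
    discovered adj (v + 1) = discovered adj v ++ [(v + 1, par adj (v + 1))] := by
  simp [discovered, List.range'_1_concat, Nat.add_comm]

theorem NoConflict.reflTransGen_discover_succ (hG : IsGraphOn n adj) (hc : NoConflict adj)
    (hv : v < n) :
    Relation.ReflTransGen (DFSStep n adj) (discovered adj v, ancestors adj v)
      (discovered adj (v + 1), ancestors adj (v + 1)) := by
  set p := par adj (v + 1) with hp_def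
  have hplt : p < v + 1 := par_lt_self (Nat.succ_ne_zero v)
  have hp : p ∈ ancestors adj v ∨ p = 0 := by
    rcases eq_or_ne p 0 with h | h
    · exact .inr h
    · exact .inl (hc.mem_ancestors (by omega) (by omega) (adj_par h) (Nat.lt_succ_self v))
  obtain ⟨l, hl, hlt⟩ := exists_ancestors_eq_append hp
  have hdone : ∀ t ∈ l, ∀ u, adj t u → u ∈ (discovered adj v).map Prod.fst := by
    intro t ht u htu
    have htv := pos_and_le_of_mem_ancestors (hl ▸ List.mem_append_left _ ht)
    have hpt := hlt t ht
    have hu := (hG.2 t u htu).2.2.1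
    have huv : u ≤ v := by
      by_contra huv
      rcases eq_or_ne u (v + 1) with rfl | hu'
      · exact (le_par_s8 htu (by omega)).not_gt hpt
      · exact hc (v + 1) t u ⟨htu, hpt, by omega, by omega⟩
    rw [map_fst_discovered, List.mem_range'_1]
    omega
  have hnew : v + 1 ∉ (discovered adj v).map Prod.fst := by
    rw [map_fst_discovered, List.mem_range'_1]
    omega
  have hdiscover : DFSStep n adj (discovered adj v, ancestors adj p)
      (discovered adj (v + 1), ancestors adj (v + 1)) := by
    rw [discovered_succ, ancestors_of_ne_zero (Nat.succ_ne_zero v), ← hp_def]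
    rcases eq_or_ne p 0 with h0 | hp0
    · rw [h0, ancestors_zero]
      exact .root _ _ (by omega) (by omega) hnew
    · rw [ancestors_of_ne_zero hp0]
      exact .descend _ _ _ _ (adj_par hp0) hnew
  rw [hl]
  exact (DFSStep.reflTransGen_backtrack_append hdone).tail hdiscover

theorem NoConflict.validDFS (hG : IsGraphOn n adj) (hc : NoConflict adj) : ValidDFS n adj := by
  refine ⟨discovered adj n, ?_, by simpa using map_fst_discovered⟩
  have hrun : ∀ v ≤ n, Relation.ReflTransGen (DFSStep n adj) ([], [])
      (discovered adj v, ancestors adj v) := by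
    intro v hv
    induction v with
    | zero => simpa [discovered] using .refl
    | succ v ih => exact (ih (by omega)).trans (hc.reflTransGen_discover_succ hG (by omega))
  have hfinish := DFSStep.reflTransGen_backtrack_append (n := n) (s := [])
    (l := ancestors adj n) (order := discovered adj n) fun t _ u htu => by
      have := hG.2 t u htu
      rw [map_fst_discovered, List.mem_range'_1]
      omega
  rw [List.append_nil] at hfinish
  exact (hrun n le_rfl).trans hfinish

end NoConflict

def repair (adj : ℕ → ℕ → Prop) (F : Set ℕ) (R : Set (ℕ × ℕ)) (a b : ℕ) : Prop :=
  (adj a b ∧ (a, b) ∉ R ∧ (b, a) ∉ R) ∨ (b ∈ F ∧ a + 1 = b) ∨ (a ∈ F ∧ b + 1 = a)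

section Repair

variable {n : ℕ} {adj : ℕ → ℕ → Prop} {F : Set ℕ} {R : Set (ℕ × ℕ)}

theorem IsGraphOn.repair (hG : IsGraphOn n adj) (hF : ∀ v ∈ F, 2 ≤ v ∧ v ≤ n) :
    IsGraphOn n (repair adj F R) := by
  refine ⟨fun a b h => ?_, fun a b h => ?_⟩
  · rcases h with ⟨h, hab, hba⟩ | h | h
    · exact .inl ⟨hG.1 h, hba, hab⟩
    · exact .inr (.inr h)
    · exact .inr (.inl h)
  · rcases h with ⟨h, -, -⟩ | ⟨hb, rfl⟩ | ⟨ha, rfl⟩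
    · exact hG.2 a b h
    · have := hF _ hb
      omega
    · have := hF _ ha
      omega

theorem edgeDiff_repair_le (hF : F.Finite) (hR : R.Finite) (hR_lt : ∀ q ∈ R, q.1 < q.2) :
    edgeDiff adj (repair adj F R) ≤ R.ncard + F.ncard := by
  have hsub : {p : ℕ × ℕ | p.1 < p.2 ∧ ¬(adj p.1 p.2 ↔ repair adj F R p.1 p.2)} ⊆
      R ∪ (fun v => (v - 1, v)) '' F := by
    rintro ⟨a, b⟩ ⟨hab, hne⟩
    by_cases habR : (a, b) ∈ R
    · exact .inl habR
    have hbaR : (b, a) ∉ R := fun h => by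
      have : b < a := hR_lt _ h
      omega
    have hne' : ¬(a ∈ F ∧ b + 1 = a) := by omega
    obtain ⟨hb, rfl⟩ : b ∈ F ∧ a + 1 = b := by
      simp only [repair] at hne
      tauto
    exact .inr ⟨a + 1, hb, by simp⟩
  calc edgeDiff adj (repair adj F R)
      ≤ (R ∪ (fun v => (v - 1, v)) '' F).ncard := Set.ncard_le_ncard hsub (hR.union (hF.image _))
    _ ≤ R.ncard + ((fun v => (v - 1, v)) '' F).ncard := Set.ncard_union_le _ _
    _ ≤ R.ncard + F.ncard := Nat.add_le_add_left (Set.ncard_image_le hF) _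

-- Removed edges end at fixed vertices, so `p` can only grow at the vertices that are not fixed.
theorem noConflict_repair (hR_lt : ∀ q ∈ R, q.1 < q.2) (hRF : ∀ q ∈ R, q.2 ∈ F)
    (hcover : ∀ v u w, Conflict adj v u w → v ∈ F ∨ (u, w) ∈ R) :
    NoConflict (repair adj F R) := by
  rintro v u w ⟨huw, hpu, huv, hvw⟩
  have hvF : v ∉ F := fun hv => by
    have := le_par_s8 (adj := repair adj F R) (.inr (.inl ⟨hv, Nat.sub_add_cancel (by omega)⟩))
      (by omega : v - 1 < v)
    omega
  have hpar : par adj v ≤ par (repair adj F R) v := par_le_par fun a hav ha =>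
    .inl ⟨ha, fun h => hvF (hRF _ h), fun h => by
      have : v < a := hR_lt _ h
      omega⟩
  rcases huw with ⟨huw, huwR, -⟩ | ⟨-, h⟩ | ⟨-, h⟩
  · rcases hcover v u w ⟨huw, by omega, huv, hvw⟩ with h | h
    · exact hvF h
    · exact huwR h
  · omega
  · omega

end Repair

/-- If the bipartite conflict graph of `G` has a vertex cover of size `k`
(vertices `SV ⊆ V` and edges `SE ⊆ E` such that every conflicting pair uses a vertex of `SV`
or an edge of `SE`), then there is a graph `G*` on `{1,…,n}` with `|E △ E*| ≤ 2k` whose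
identity labelling is a valid DFS numbering (degree constraints are ignored). -/
theorem vertex_cover_fix (n k : ℕ) (adj : ℕ → ℕ → Prop) (hG : IsGraphOn n adj)
    (SV : Set ℕ) (SE : Set (ℕ × ℕ)) (hSV : SV.Finite) (hSE : SE.Finite)
    (hsize : SV.ncard + SE.ncard ≤ k)
    (hcover : ∀ v u w, Conflict adj v u w → v ∈ SV ∨ (u, w) ∈ SE) :
    ∃ adj' : ℕ → ℕ → Prop, IsGraphOn n adj' ∧ edgeDiff adj adj' ≤ 2 * k ∧
      ValidDFS n adj' := by
  set R : Set (ℕ × ℕ) := {q | q ∈ SE ∧ adj q.1 q.2 ∧ q.1 < q.2}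
  set F : Set ℕ := {v | v ∈ SV ∧ 2 ≤ v ∧ v ≤ n} ∪ Prod.snd '' R
  have hR : R.Finite := hSE.subset fun q hq => hq.1
  have hF : F.Finite := (hSV.subset fun v hv => hv.1).union (hR.image _)
  have hF_range : ∀ v ∈ F, 2 ≤ v ∧ v ≤ n := by
    rintro v (⟨-, hv⟩ | ⟨q, ⟨-, hq, hlt⟩, rfl⟩)
    · exact hv
    · have := hG.2 q.1 q.2 hq
      omega
  have hR_card : R.ncard ≤ SE.ncard := Set.ncard_le_ncard (fun q hq => hq.1) hSE
  have hF_card : F.ncard ≤ SV.ncard + SE.ncard :=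
    (Set.ncard_union_le _ _).trans (Nat.add_le_add
      (Set.ncard_le_ncard (fun v hv => hv.1) hSV) ((Set.ncard_image_le hR).trans hR_card))
  have hcover' : ∀ v u w, Conflict adj v u w → v ∈ F ∨ (u, w) ∈ R := by
    intro v u w hc
    obtain ⟨huw, -, huv, hvw⟩ := id hc
    have := hG.2 u w huw
    rcases hcover v u w hc with h | h
    · exact .inl (.inl ⟨h, by omega, by omega⟩)
    · exact .inr ⟨h, huw, by omega⟩
  have hG' := hG.repair (R := R) hF_range
  refine ⟨repair adj F R, hG', ?_, (noConflict_repair (fun q hq => hq.2.2)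
    (fun q hq => .inr ⟨q, hq, rfl⟩) hcover').validDFS hG'⟩
  have := edgeDiff_repair_le (adj := adj) hF hR fun q hq => hq.2.2
  omega
end

section
/- Let G = (V,E) be an undirected graph on {1,...,n}. The identity labeling is a valid FIN numbering of G if and only if the reversed labeling ν(v) = n + 1 − v is a valid DFS numbering of G. Equivalently, G has no FIN-conflicting pair (v,{u,w}) with w < v < u < p_FIN(v) if and only if G under the reversed labeling has no conflicting pair. -/
open Classical

/-- One step of a depth-first search that also records the finishing order.  The state is
`(disc, fin, stack)`: discovered vertices in discovery order, finished vertices in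
finishing order, and the stack of active vertices (top first). -/
inductive FINStep (n : ℕ) (adj : ℕ → ℕ → Prop) :
    List ℕ × List ℕ × List ℕ → List ℕ × List ℕ × List ℕ → Prop
  | root (v : ℕ) (disc fin : List ℕ) (hv1 : 1 ≤ v) (hv2 : v ≤ n) (hnd : v ∉ disc) :
      FINStep n adj (disc, fin, []) (disc ++ [v], fin, [v])
  | descend (v t : ℕ) (disc fin : List ℕ) (stack : List ℕ)
      (hadj : adj t v) (hnd : v ∉ disc) :
      FINStep n adj (disc, fin, t :: stack) (disc ++ [v], fin, v :: t :: stack)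
  | backtrack (t : ℕ) (disc fin : List ℕ) (stack : List ℕ)
      (hall : ∀ u, adj t u → u ∈ disc) :
      FINStep n adj (disc, fin, t :: stack) (disc, fin ++ [t], stack)

/-- The identity labelling on `{1,…,n}` is a valid FIN numbering: some DFS run finishes
the vertices exactly in the order `1, 2, …, n`. -/
def ValidFIN (n : ℕ) (adj : ℕ → ℕ → Prop) : Prop :=
  ∃ disc, Relation.ReflTransGen (FINStep n adj)
    (([], [], []) : List ℕ × List ℕ × List ℕ) (disc, List.range' 1 n, [])

/-- `p_FIN(v)`: the smallest neighbour of `v` larger than `v`, with the sentinel value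
`n + 1` (playing the role of `∞`) if no neighbour of `v` exceeds `v`. -/
noncomputable def parFIN (n : ℕ) (adj : ℕ → ℕ → Prop) (v : ℕ) : ℕ :=
  if ∃ u, adj u v ∧ v < u then sInf {u | adj u v ∧ v < u} else n + 1

/-- A FIN-conflicting pair `(v, {u,w})`: `{u,w} ∈ E` and `w < v < u < p_FIN(v)`. -/
def FINConflict (n : ℕ) (adj : ℕ → ℕ → Prop) (v u w : ℕ) : Prop :=
  adj u w ∧ w < v ∧ v < u ∧ u < parFIN n adj v

/-! Both equivalences come from reversing time.  Read backwards, a complete search that finishes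
the vertices in the order `1, …, n` pops each vertex off the stack where the forward run pushed
it and vice versa, with the same stack at every moment: it is a search that discovers the
vertices in the order `n, …, 1`, i.e. in the order of increasing `ν`; the same holds in the
other direction.  The conflicting pairs correspond under `ν`, since `ν` is an order-reversing
involution of `{1, …, n}` exchanging `p_FIN` with `p`: `p (ν v) = ν (p_FIN v)`. -/

open List Relation

theorem List.mem_range'_one {u n : ℕ} : u ∈ range' 1 n ↔ 1 ≤ u ∧ u ≤ n := by
  rw [mem_range'_1]
  omega

theorem map_sub_eq_range'_iff {n : ℕ} {L : List ℕ} :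
    L.map (fun v => n + 1 - v) = range' 1 n ↔ L = (range' 1 n).reverse := by
  have hinvol : ∀ M : List ℕ, (∀ x ∈ M, x ≤ n + 1) →
      (M.map (fun v => n + 1 - v)).map (fun v => n + 1 - v) = M := by
    intro M hM
    rw [List.map_map]
    refine (map_congr_left fun x hx => ?_).trans (map_id M)
    have := hM x hx
    simp only [Function.comp_apply, id]
    omega
  have hrev : (range' 1 n).reverse.map (fun v => n + 1 - v) = range' 1 n := by
    apply ext_getElem (by simp)
    intro i h1 h2
    simp only [getElem_map, getElem_reverse, getElem_range', length_range']
    simp only [length_range'] at h2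
    omega
  refine ⟨fun h => ?_, fun h => h ▸ hrev⟩
  have hL : ∀ x ∈ L, x ≤ n + 1 := by
    intro x hx
    have := mem_range'_one.mp (h ▸ mem_map_of_mem hx)
    omega
  have hR : ∀ x ∈ (range' 1 n).reverse, x ≤ n + 1 := by
    intro x hx
    have := mem_range'_one.mp (mem_reverse.mp hx)
    omega
  calc L = (L.map (fun v => n + 1 - v)).map (fun v => n + 1 - v) := (hinvol L hL).symm
    _ = ((range' 1 n).reverse.map (fun v => n + 1 - v)).map (fun v => n + 1 - v) := by
      rw [h, hrev]
    _ = (range' 1 n).reverse := hinvol _ hR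

theorem Relation.ReflTransGen.exists_reverse_simulation {α β : Type*} {R : α → α → Prop}
    {S : β → β → Prop} (Corr : α → β → Prop) {a b : α} {b' : β}
    (hab : ReflTransGen R a b) (hb : Corr b b')
    (step : ∀ s t, ReflTransGen R a s → R s t → ∀ t', Corr t t' → ∃ s', Corr s s' ∧ S t' s') :
    ∃ a', Corr a a' ∧ ReflTransGen S b' a' := by
  suffices ∀ s, ReflTransGen R s b → ReflTransGen R a s →
      ∃ s', Corr s s' ∧ ReflTransGen S b' s' from this a hab .refl
  intro s hsb
  induction hsb using ReflTransGen.head_induction_on with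
  | refl => exact fun _ => ⟨b', hb, .refl⟩
  | head hst _ ih =>
    intro has
    obtain ⟨t', ht, hbt⟩ := ih (has.tail hst)
    obtain ⟨s', hs, hts⟩ := step _ _ has hst t' ht
    exact ⟨s', hs, hbt.tail hts⟩

structure FINInvariant (adj : ℕ → ℕ → Prop) (s : List ℕ × List ℕ × List ℕ) : Prop where
  stack_chain : s.2.2.IsChain (fun a b => adj b a)
  finished_nbr_mem : ∀ x ∈ s.2.1, ∀ y, adj x y → y ∈ s.1

structure DFSInvariant_s18 (adj : ℕ → ℕ → Prop) (d : List (ℕ × ℕ) × List ℕ) : Prop where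
  stack_chain : d.2.IsChain (fun a b => adj b a)
  stack_nodup : d.2.Nodup
  stack_subset : ∀ v ∈ d.2, v ∈ d.1.map Prod.fst
  explored_nbr_mem : ∀ u ∈ d.1.map Prod.fst, u ∉ d.2 → ∀ y, adj u y → y ∈ d.1.map Prod.fst

section

variable {n : ℕ} {adj : ℕ → ℕ → Prop}

theorem FINInvariant.of_reachable {s : List ℕ × List ℕ × List ℕ}
    (h : ReflTransGen (FINStep n adj) ([], [], []) s) : FINInvariant adj s := by
  induction h with
  | refl => exact ⟨.nil, by simp⟩
  | tail _ hst ih =>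
    obtain ⟨hchain, hnbr⟩ := ih
    cases hst with
    | root v disc fin => exact ⟨.singleton v, fun x hx y hy => mem_append_left _ (hnbr x hx y hy)⟩
    | descend v t disc fin stack hadj =>
      exact ⟨.cons_cons hadj hchain, fun x hx y hy => mem_append_left _ (hnbr x hx y hy)⟩
    | backtrack t disc fin stack hall =>
      refine ⟨hchain.tail, fun x hx => ?_⟩
      rcases mem_append.mp hx with hx | hx
      · exact hnbr x hx
      · exact mem_singleton.mp hx ▸ hall

theorem DFSInvariant_s18.of_reachable {d : List (ℕ × ℕ) × List ℕ}
    (h : ReflTransGen (DFSStep n adj) ([], []) d) : DFSInvariant_s18 adj d := by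
  induction h with
  | refl => exact ⟨.nil, nodup_nil, by simp, by simp⟩
  | tail _ hst ih =>
    obtain ⟨hchain, hnodup, hsub, hnbr⟩ := ih
    cases hst with
    | root v order _ _ hnd =>
      refine ⟨.singleton v, nodup_singleton v, by simp, fun u hu hus y hy => ?_⟩
      simp only [map_append, map_cons, map_nil, mem_append, mem_singleton] at hu ⊢
      exact .inl (hnbr u (hu.resolve_right (by simpa using hus)) (by simp) y hy)
    | descend v t order stack hadj hnd =>
      refine ⟨.cons_cons hadj hchain, nodup_cons.mpr ⟨fun h => hnd (hsub v h), hnodup⟩,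
        fun u hu => ?_, fun u hu hus y hy => ?_⟩
      · simp only [map_append, map_cons, map_nil, mem_append, mem_singleton]
        rcases mem_cons.mp hu with rfl | hu
        · exact .inr rfl
        · exact .inl (hsub u hu)
      · simp only [map_append, map_cons, map_nil, mem_append, mem_singleton] at hu ⊢
        rcases hu with hu | rfl
        · exact .inl (hnbr u hu (fun h => hus (mem_cons_of_mem _ h)) y hy)
        · exact absurd mem_cons_self hus
    | backtrack t order stack hall =>
      refine ⟨hchain.tail, hnodup.of_cons, fun v hv => hsub v (mem_cons_of_mem _ hv),
        fun u hu hus y hy => ?_⟩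
      by_cases hut : u = t
      · subst hut; exact hall y hy
      · exact hnbr u hu (by simp [hut, hus]) y hy

theorem FINStep.push {disc fin stack : List ℕ} {t : ℕ}
    (hchain : (t :: stack).IsChain (fun a b => adj b a)) (ht : 1 ≤ t ∧ t ≤ n) (hnd : t ∉ disc) :
    FINStep n adj (disc, fin, stack) (disc ++ [t], fin, t :: stack) := by
  cases stack with
  | nil => exact .root t disc fin ht.1 ht.2 hnd
  | cons s stack => exact .descend t s disc fin stack (isChain_cons_cons.mp hchain).1 hnd

theorem DFSStep.push {order : List (ℕ × ℕ)} {stack : List ℕ} {t : ℕ}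
    (hchain : (t :: stack).IsChain (fun a b => adj b a)) (ht : 1 ≤ t ∧ t ≤ n)
    (hnd : t ∉ order.map Prod.fst) :
    ∃ p, DFSStep n adj (order, stack) (order ++ [(t, p)], t :: stack) := by
  cases stack with
  | nil => exact ⟨0, .root t order ht.1 ht.2 hnd⟩
  | cons s stack => exact ⟨s, .descend t s order stack (isChain_cons_cons.mp hchain).1 hnd⟩

theorem IsGraphOn.mem_of_adj_of_perm {L : List ℕ} (hG : IsGraphOn n adj) (hL : L.Perm (range' 1 n))
    {u v : ℕ} (h : adj v u) : u ∈ L := by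
  obtain ⟨-, -, hu1, hu2, -⟩ := hG.2 v u h
  exact hL.mem_iff.mpr (mem_range'_one.mpr ⟨hu1, hu2⟩)

/- `FINReversal F s d`: the forward run finishes in the order `F`, and `d` is the state the
backward run is in when the forward one is in state `s`. -/
def FINReversal (F : List ℕ) (s : List ℕ × List ℕ × List ℕ) (d : List (ℕ × ℕ) × List ℕ) :
    Prop :=
  ∃ rest, F = s.2.1 ++ rest ∧ d.1.map Prod.fst = rest.reverse ∧ d.2 = s.2.2

theorem FINReversal.dfsStep_backtrack {F disc fin stack : List ℕ} {ord : List (ℕ × ℕ)}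
    {rest : List ℕ} {v : ℕ} (hG : IsGraphOn n adj) (hF : F.Perm (range' 1 n))
    (hinv : FINInvariant adj (disc, fin, stack)) (hv : v ∉ disc) (hFrest : F = fin ++ rest)
    (hord : ord.map Prod.fst = rest.reverse) :
    DFSStep n adj (ord, v :: stack) (ord, stack) := by
  refine .backtrack v ord stack fun u hu => ?_
  have hu_fin : u ∉ fin := fun h => hv (hinv.finished_nbr_mem u h v (hG.1 hu))
  have huF : u ∈ F := hG.mem_of_adj_of_perm hF hu
  rw [hFrest, mem_append] at huF
  rw [hord, mem_reverse]
  exact huF.resolve_left hu_fin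

theorem FINReversal.exists_dfsStep {F : List ℕ} (hG : IsGraphOn n adj)
    (hF : F.Perm (range' 1 n)) {s t : List ℕ × List ℕ × List ℕ} (hinv : FINInvariant adj s)
    (hst : FINStep n adj s t) {d : List (ℕ × ℕ) × List ℕ} (hd : FINReversal F t d) :
    ∃ d', FINReversal F s d' ∧ DFSStep n adj d d' := by
  obtain ⟨ord, stack'⟩ := d
  obtain ⟨rest, hFrest, hord, rfl⟩ := hd
  dsimp only at hord
  cases hst with
  | root v disc fin _ _ hv =>
    exact ⟨(ord, []), ⟨rest, hFrest, hord, rfl⟩, dfsStep_backtrack hG hF hinv hv hFrest hord⟩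
  | descend v p disc fin stack _ hv =>
    exact ⟨(ord, p :: stack), ⟨rest, hFrest, hord, rfl⟩,
      dfsStep_backtrack hG hF hinv hv hFrest hord⟩
  | backtrack t disc fin stack _ =>
    simp only [append_assoc, singleton_append] at hFrest
    have hnodup : (fin ++ t :: rest).Nodup := hFrest ▸ hF.nodup_iff.mpr nodup_range'
    have ht : t ∉ ord.map Prod.fst := by
      rw [hord, mem_reverse]
      exact (nodup_cons.mp (nodup_append.mp hnodup).2.1).1
    have htF : t ∈ F := hFrest ▸ mem_append_right _ mem_cons_self
    have htb : 1 ≤ t ∧ t ≤ n := mem_range'_one.mp (hF.mem_iff.mp htF)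
    obtain ⟨p, hstep⟩ := DFSStep.push hinv.stack_chain htb ht
    exact ⟨(ord ++ [(t, p)], t :: stack), ⟨t :: rest, hFrest, by simp [hord], rfl⟩, hstep⟩

/- The forward search has discovered exactly the vertices the backward one has not yet left:
the undiscovered ones and those on the stack. -/
def DFSReversal (L : List ℕ) (d : List (ℕ × ℕ) × List ℕ) (s : List ℕ × List ℕ × List ℕ) :
    Prop :=
  ∃ rest, L = d.1.map Prod.fst ++ rest ∧ s.2.1 = rest.reverse ∧ s.2.2 = d.2 ∧
    ∀ u, u ∈ s.1 ↔ u ∈ rest ∨ u ∈ d.2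

theorem DFSReversal.finStep_backtrack {L disc fin stack rest : List ℕ} {order : List (ℕ × ℕ)}
    {v : ℕ} (hG : IsGraphOn n adj) (hL : L.Perm (range' 1 n))
    (hinv : DFSInvariant_s18 adj (order, stack)) (hv : v ∉ order.map Prod.fst)
    (hLrest : L = order.map Prod.fst ++ v :: rest)
    (hdisc : ∀ u, u ∈ disc ↔ u ∈ rest ∨ u ∈ v :: stack) :
    FINStep n adj (disc, fin, v :: stack) (disc, fin ++ [v], stack) := by
  refine .backtrack v disc fin stack fun u hu => (hdisc u).mpr ?_
  have huL : u ∈ L := hG.mem_of_adj_of_perm hL hu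
  rw [hLrest, mem_append, mem_cons] at huL
  rcases huL with hu_order | rfl | hu_rest
  · by_contra h
    simp only [not_or, mem_cons] at h
    exact hv (hinv.explored_nbr_mem u hu_order h.2.2 v (hG.1 hu))
  · exact .inr mem_cons_self
  · exact .inl hu_rest

theorem DFSReversal.exists_finStep {L : List ℕ} (hG : IsGraphOn n adj)
    (hL : L.Perm (range' 1 n)) {d e : List (ℕ × ℕ) × List ℕ} (hinv : DFSInvariant_s18 adj d)
    (hde : DFSStep n adj d e) {s : List ℕ × List ℕ × List ℕ} (hs : DFSReversal L e s) :
    ∃ s', DFSReversal L d s' ∧ FINStep n adj s s' := by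
  obtain ⟨disc, fin, stack'⟩ := s
  obtain ⟨rest, hLrest, hfin, rfl, hdisc⟩ := hs
  dsimp only at hfin hdisc
  cases hde with
  | root v order _ _ hv =>
    simp only [map_append, map_cons, map_nil, append_assoc, singleton_append] at hLrest
    refine ⟨(disc, fin ++ [v], []), ⟨v :: rest, hLrest, by simp [hfin], rfl, ?_⟩,
      finStep_backtrack hG hL hinv hv hLrest hdisc⟩
    intro u
    simp only [hdisc, mem_cons, not_mem_nil]
    tauto
  | descend v p order stack _ hv =>
    simp only [map_append, map_cons, map_nil, append_assoc, singleton_append] at hLrest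
    refine ⟨(disc, fin ++ [v], p :: stack), ⟨v :: rest, hLrest, by simp [hfin], rfl, ?_⟩,
      finStep_backtrack hG hL hinv hv hLrest hdisc⟩
    intro u
    simp only [hdisc, mem_cons]
    tauto
  | backtrack t order stack _ =>
    have hnodup : (order.map Prod.fst ++ rest).Nodup := hLrest ▸ hL.nodup_iff.mpr nodup_range'
    have ht_order : t ∈ order.map Prod.fst := hinv.stack_subset t mem_cons_self
    have htb : 1 ≤ t ∧ t ≤ n :=
      mem_range'_one.mp (hL.mem_iff.mp (hLrest ▸ mem_append_left _ ht_order))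
    have ht : t ∉ disc := by
      rw [hdisc, not_or]
      exact ⟨fun h => disjoint_of_nodup_append hnodup ht_order h,
        (nodup_cons.mp hinv.stack_nodup).1⟩
    refine ⟨(disc ++ [t], fin, t :: stack), ⟨rest, hLrest, hfin, rfl, ?_⟩,
      FINStep.push hinv.stack_chain htb ht⟩
    intro u
    simp only [hdisc, mem_append, mem_cons]
    tauto

theorem exists_dfsRun_of_finRun {F disc : List ℕ} (hG : IsGraphOn n adj)
    (hF : F.Perm (range' 1 n)) (h : ReflTransGen (FINStep n adj) ([], [], []) (disc, F, [])) :
    ∃ ord, DFSRun n adj ord ∧ ord.map Prod.fst = F.reverse := by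
  obtain ⟨⟨ord, stack⟩, ⟨rest, hFrest, hord, hstack⟩, hrun⟩ :=
    h.exists_reverse_simulation (FINReversal F) (b' := ([], [])) ⟨[], by simp, rfl, rfl⟩
      fun _ _ hs hst _ ht => FINReversal.exists_dfsStep hG hF (.of_reachable hs) hst ht
  dsimp only at hFrest hord hstack
  subst hFrest hstack
  exact ⟨ord, hrun, by simpa using hord⟩

theorem exists_finRun_of_dfsRun {ord : List (ℕ × ℕ)} (hG : IsGraphOn n adj)
    (hord : (ord.map Prod.fst).Perm (range' 1 n)) (h : DFSRun n adj ord) :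
    ∃ disc, ReflTransGen (FINStep n adj) ([], [], []) (disc, (ord.map Prod.fst).reverse, []) := by
  obtain ⟨⟨disc, fin, stack⟩, ⟨rest, hrest, hfin, hstack, -⟩, hrun⟩ :=
    h.exists_reverse_simulation (DFSReversal (ord.map Prod.fst)) (b' := ([], [], []))
      ⟨[], by simp, rfl, rfl, by simp⟩
      fun _ _ hd hde _ he => DFSReversal.exists_finStep hG hord (.of_reachable hd) hde he
  dsimp only at hrest hfin hstack
  subst hfin hstack
  exact ⟨disc, by simpa [hrest] using hrun⟩

theorem parFIN_le (hG : IsGraphOn n adj) (v : ℕ) : parFIN n adj v ≤ n + 1 := by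
  unfold parFIN
  split_ifs with h
  · obtain ⟨u, hu, huv⟩ := h
    have := hG.2 u v hu
    exact (Nat.sInf_le (show u ∈ {u | adj u v ∧ v < u} from ⟨hu, huv⟩)).trans (by omega)
  · exact le_rfl

theorem par_reverse (hG : IsGraphOn n adj) {v : ℕ} (hv : v ≤ n) :
    par (fun a b => adj (n + 1 - a) (n + 1 - b)) (n + 1 - v) = n + 1 - parFIN n adj v := by
  unfold par parFIN
  simp only [Nat.sub_sub_self (by omega : v ≤ n + 1)]
  split_ifs with h
  · set m := sInf {u | adj u v ∧ v < u}
    obtain ⟨hm_adj, hm_gt⟩ : adj m v ∧ v < m := Nat.sInf_mem h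
    have hm_le : m ≤ n := (hG.2 m v hm_adj).2.1
    refine IsGreatest.csSup_eq ⟨⟨by rwa [Nat.sub_sub_self (by omega)], by omega⟩, ?_⟩
    rintro x ⟨hx, hxv⟩
    have : m ≤ n + 1 - x := Nat.sInf_le ⟨hx, by omega⟩
    omega
  · have hempty : {x | adj (n + 1 - x) v ∧ x < n + 1 - v} = ∅ :=
      Set.eq_empty_of_forall_notMem fun x ⟨hx, hxv⟩ => h ⟨n + 1 - x, hx, by omega⟩
    simp [hempty]

theorem exists_finConflict_iff (hG : IsGraphOn n adj) :
    (∃ v u w, FINConflict n adj v u w) ↔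
      ∃ v u w, Conflict (fun a b => adj (n + 1 - a) (n + 1 - b)) v u w := by
  constructor
  · rintro ⟨v, u, w, hadj, hwv, hvu, hup⟩
    obtain ⟨-, hu, -, hw, -⟩ := hG.2 u w hadj
    refine ⟨n + 1 - v, n + 1 - u, n + 1 - w, ?_, ?_, by omega, by omega⟩
    · show adj (n + 1 - (n + 1 - u)) (n + 1 - (n + 1 - w))
      rwa [Nat.sub_sub_self (by omega : u ≤ n + 1), Nat.sub_sub_self (by omega : w ≤ n + 1)]
    · rw [par_reverse hG (by omega)]
      omega
  · rintro ⟨v, u, w, hadj, hpar, huv, hvw⟩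
    obtain ⟨hu1, hu2, hw1, hw2, -⟩ := hG.2 _ _ hadj
    refine ⟨n + 1 - v, n + 1 - u, n + 1 - w, hadj, by omega, by omega, ?_⟩
    have hpar' := par_reverse hG (v := n + 1 - v) (by omega)
    rw [Nat.sub_sub_self (by omega : v ≤ n + 1)] at hpar'
    have := parFIN_le hG (n + 1 - v)
    omega

end

/-- The identity labelling is a valid FIN numbering of `G` iff the
reversed labelling `ν(v) = n + 1 - v` is a valid DFS numbering of `G`.  Equivalently,
`G` has no FIN-conflicting pair iff the graph relabelled by `ν` (i.e. with adjacency
`adj (n+1-a) (n+1-b)`) has no conflicting pair. -/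
theorem validFIN_iff_reverse_validDFS (n : ℕ) (adj : ℕ → ℕ → Prop)
    (hG : IsGraphOn n adj) :
    (ValidFIN n adj ↔ ValidDFSLabel n adj (fun v => n + 1 - v)) ∧
    ((¬∃ v u w, FINConflict n adj v u w) ↔
      ¬∃ v u w, Conflict (fun a b => adj (n + 1 - a) (n + 1 - b)) v u w) := by
  refine ⟨⟨fun ⟨_, hfin⟩ => ?_, fun ⟨ord, hrun, hlabel⟩ => ?_⟩,
    not_congr (exists_finConflict_iff hG)⟩
  · obtain ⟨ord, hrun, hord⟩ := exists_dfsRun_of_finRun hG (Perm.refl _) hfin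
    exact ⟨ord, hrun, map_sub_eq_range'_iff.mpr hord⟩
  · have hord := map_sub_eq_range'_iff.mp hlabel
    obtain ⟨disc, hfin⟩ := exists_finRun_of_dfsRun hG (hord ▸ reverse_perm _) hrun
    exact ⟨disc, by rwa [hord, reverse_reverse] at hfin⟩
end
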